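/- For every natural number m ≥ 2 and every real α with 0 < α < π, the sequence (1/n^m) · Σ_{k=0}^{n−1} cot^m((α + kπ)/n) converges, as n → ∞, to P_{m−1}(cot α)/(m−1)!. -/

import Mathlib

/-!
Put `x_k = (α + kπ)/n` and `S_i(n) = ∑_{k<n} cot^i x_k`. The numbers `e^{2i x_k}` are `w ζ^k`
with `ζ` a primitive `n`-th root of unity and `w^n = e^{2iα}`, so expanding each `1/(1 - w ζ^k)`
as a geometric series gives the multiplication formula `∑_k cot x_k = n cot α`. Differentiating
it `j` times in `α`, using `(P_j ∘ cot)' = -P_{j+1} ∘ cot`, gives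
`∑_k P_j(cot x_k) = n^{j+1} P_j(cot α)`. As `P_j = j! X^{j+1} + (terms of degree ≤ j)`, this
expresses `S_{j+1}(n)/n^{j+1}` through `P_j(cot α)` and the `S_i(n)/n^{j+1}`, `i ≤ j`, which tend
to `0` by strong induction on `j`.
-/

open Filter

/-- The derivative polynomials of the tangent function:
`P 0 = X`, `P (n+1) = (1 + X²) · (P n)'`. -/
noncomputable def P : ℕ → Polynomial ℝ
  | 0 => Polynomial.X
  | n + 1 => (1 + Polynomial.X ^ 2) * Polynomial.derivative (P n)

open Finset Real Polynomial Topology Nat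

theorem IsPrimitiveRoot.sum_pow_pow_eq_zero {K : Type*} [Field K] {ζ : K} {n j : ℕ}
    (hζ : IsPrimitiveRoot ζ n) (hj0 : j ≠ 0) (hjn : j < n) :
    ∑ k ∈ range n, (ζ ^ k) ^ j = 0 := by
  simp_rw [← pow_mul, mul_comm _ j, pow_mul]
  rw [geom_sum_eq (hζ.pow_ne_one_of_pos_of_lt hj0 hjn), ← pow_mul, mul_comm, pow_mul,
    hζ.pow_eq_one, one_pow, sub_self, zero_div]

theorem IsPrimitiveRoot.sum_one_div_one_sub_mul_pow {K : Type*} [Field K] {ζ w : K} {n : ℕ}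
    (hζ : IsPrimitiveRoot ζ n) (hw : w ^ n ≠ 1) :
    ∑ k ∈ range n, 1 / (1 - w * ζ ^ k) = n / (1 - w ^ n) := by
  have hn : 0 < n := Nat.pos_of_ne_zero (by rintro rfl; exact hw (pow_zero w))
  have hwn : 1 - w ^ n ≠ 0 := sub_ne_zero.2 (Ne.symm hw)
  have hterm (k : ℕ) :
      1 / (1 - w * ζ ^ k) = (∑ j ∈ range n, w ^ j * (ζ ^ k) ^ j) / (1 - w ^ n) := by
    have hpow : (w * ζ ^ k) ^ n = w ^ n := by
      rw [mul_pow, ← pow_mul, mul_comm k, pow_mul, hζ.pow_eq_one, one_pow, mul_one]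
    have hk : 1 - w * ζ ^ k ≠ 0 := fun h ↦ hw (by rw [← hpow, ← sub_eq_zero.1 h, one_pow])
    rw [div_eq_div_iff hk hwn, one_mul, ← hpow, ← mul_neg_geom_sum, mul_comm]
    simp_rw [mul_pow]
  rw [sum_congr rfl fun k _ ↦ hterm k, ← sum_div, sum_comm]
  simp_rw [← mul_sum]
  rw [sum_eq_single_of_mem 0 (mem_range.2 hn) fun j hj hj0 ↦ by
    rw [hζ.sum_pow_pow_eq_zero hj0 (mem_range.1 hj), mul_zero]]
  simp

theorem Complex.exp_two_mul_I_mul_ne_one {z : ℂ} (hz : sin z ≠ 0) : exp (2 * I * z) ≠ 1 := by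
  rw [Ne, exp_eq_one_iff]
  rintro ⟨k, hk⟩
  refine hz (sin_eq_zero_iff.2 ⟨k, ?_⟩)
  have : (2 * I : ℂ) ≠ 0 := by simp
  exact mul_left_cancel₀ this (by rw [hk]; ring)

theorem Complex.cot_eq_two_div_one_sub_exp_sub_one {z : ℂ} (hz : exp (2 * I * z) ≠ 1) :
    cot z = (2 / (1 - exp (2 * I * z)) - 1) / I := by
  have : 1 - exp (2 * I * z) ≠ 0 := sub_ne_zero.2 (Ne.symm hz)
  rw [cot_eq_exp_ratio]
  field_simp
  ring

theorem Complex.sum_cot_add_mul_pi_div {z : ℂ} (hz : sin z ≠ 0) {n : ℕ} (hn : n ≠ 0) :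
    ∑ k ∈ range n, cot ((z + k * π) / n) = n * cot z := by
  have hζ := isPrimitiveRoot_exp n hn
  set w := exp (2 * I * z / n)
  set ζ := exp (2 * π * I / n)
  have hwn : w ^ n = exp (2 * I * z) := by
    rw [← exp_nat_mul]
    congr 1
    field_simp
  have hexp (k : ℕ) : exp (2 * I * ((z + k * π) / n)) = w * ζ ^ k := by
    rw [← exp_nat_mul, ← exp_add]
    congr 1
    ring
  have hne := exp_two_mul_I_mul_ne_one hz
  have hne_k (k : ℕ) : w * ζ ^ k ≠ 1 := fun h ↦ hne <| by
    rw [← hwn, ← one_pow n, ← h, mul_pow, ← pow_mul, mul_comm k, pow_mul, hζ.pow_eq_one,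
      one_pow, mul_one]
  rw [sum_congr rfl fun k _ ↦ cot_eq_two_div_one_sub_exp_sub_one (hexp k ▸ hne_k k)]
  simp_rw [hexp, div_eq_mul_one_div (2 : ℂ) (1 - _)]
  rw [← sum_div, sum_sub_distrib, ← mul_sum, hζ.sum_one_div_one_sub_mul_pow (hwn ▸ hne), hwn,
    cot_eq_two_div_one_sub_exp_sub_one hne, sum_const, card_range, nsmul_one]
  ring

theorem Real.sum_cot_add_mul_pi_div {x : ℝ} (hx : sin x ≠ 0) {n : ℕ} (hn : n ≠ 0) :
    ∑ k ∈ range n, cot ((x + k * π) / n) = n * cot x := by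
  have := Complex.sum_cot_add_mul_pi_div (z := x) (by exact_mod_cast hx) hn
  exact_mod_cast this

theorem natDegree_P_le (j : ℕ) : (P j).natDegree ≤ j + 1 := by
  induction j with
  | zero => simp [P]
  | succ j ih =>
    calc (P (j + 1)).natDegree
        ≤ (1 + X ^ 2 : ℝ[X]).natDegree + (derivative (P j)).natDegree := natDegree_mul_le
      _ ≤ 2 + j := by
        gcongr
        · exact (natDegree_add_le _ _).trans (by simp)
        · exact (natDegree_derivative_le _).trans (by omega)
      _ = j + 1 + 1 := by ring

theorem coeff_P_succ (j : ℕ) : (P j).coeff (j + 1) = j ! := by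
  induction j with
  | zero => simp [P]
  | succ j ih =>
    have hvanish : (derivative (P j)).coeff (j + 2) = 0 :=
      coeff_eq_zero_of_natDegree_lt <| (natDegree_derivative_le _).trans_lt (by
        have := natDegree_P_le j; omega)
    rw [P, add_mul, one_mul, coeff_add, coeff_X_pow_mul, hvanish, coeff_derivative, ih,
      factorial_succ]
    push_cast
    ring

theorem eval_P (j : ℕ) (t : ℝ) :
    (P j).eval t = j ! * t ^ (j + 1) + ∑ i ∈ range (j + 1), (P j).coeff i * t ^ i := by
  rw [eval_eq_sum_range' (Nat.lt_succ_of_le (natDegree_P_le j)), sum_range_succ, coeff_P_succ,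
    add_comm]

theorem Real.hasDerivAt_cot {x : ℝ} (hx : sin x ≠ 0) :
    HasDerivAt cot (-(1 + cot x ^ 2)) x := by
  rw [show cot = cos / sin from funext cot_eq_cos_div_sin]
  refine ((hasDerivAt_cos x).div (hasDerivAt_sin x) hx).congr_deriv ?_
  rw [Pi.div_apply]
  field_simp
  ring

theorem hasDerivAt_eval_P_cot (j : ℕ) {x : ℝ} (hx : sin x ≠ 0) :
    HasDerivAt (fun y ↦ (P j).eval (cot y)) (-(P (j + 1)).eval (cot x)) x := by
  refine (((P j).hasDerivAt (cot x)).comp x (hasDerivAt_cot hx)).congr_deriv ?_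
  rw [P]
  simp only [eval_mul, eval_add, eval_one, eval_pow, eval_X]
  ring

theorem Real.sin_add_nat_mul_pi_div_ne_zero {x : ℝ} (hx : sin x ≠ 0) (k : ℕ) {n : ℕ}
    (hn : n ≠ 0) : sin ((x + k * π) / n) ≠ 0 := by
  rw [Ne, sin_eq_zero_iff] at hx ⊢
  rintro ⟨l, hl⟩
  refine hx ⟨l * n - k, ?_⟩
  rw [eq_div_iff (by exact_mod_cast hn)] at hl
  push_cast
  linarith

theorem sum_eval_P_cot_add_mul_pi_div {x : ℝ} (hx : sin x ≠ 0) {n : ℕ} (hn : n ≠ 0)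
    (j : ℕ) :
    ∑ k ∈ range n, (P j).eval (cot ((x + k * π) / n)) = n ^ (j + 1) * (P j).eval (cot x) := by
  induction j generalizing x with
  | zero => simpa [P] using sum_cot_add_mul_pi_div hx hn
  | succ j ih =>
    have hlhs : HasDerivAt (fun y ↦ ∑ k ∈ range n, (P j).eval (cot ((y + k * π) / n)))
        (∑ k ∈ range n, -(P (j + 1)).eval (cot ((x + k * π) / n)) * (1 / n)) x := by
      refine HasDerivAt.fun_sum fun k _ ↦ ?_
      have hinner : HasDerivAt (fun y ↦ (y + k * π) / n) (1 / n) x := by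
        simpa using ((hasDerivAt_id x).add_const _).div_const (n : ℝ)
      exact (hasDerivAt_eval_P_cot j (sin_add_nat_mul_pi_div_ne_zero hx k hn)).comp x hinner
    have hrhs := (hasDerivAt_eval_P_cot j hx).const_mul ((n : ℝ) ^ (j + 1))
    have heq : (fun y ↦ ∑ k ∈ range n, (P j).eval (cot ((y + k * π) / n)))
        =ᶠ[𝓝 x] fun y ↦ (n : ℝ) ^ (j + 1) * (P j).eval (cot y) :=
      eventually_of_mem ((isOpen_ne_fun continuous_sin continuous_const).mem_nhds hx)
        fun y hy ↦ ih hy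
    have h := (hlhs.congr_of_eventuallyEq heq.symm).unique hrhs
    rw [← sum_mul, sum_neg_distrib] at h
    field_simp at h
    rw [pow_succ]
    linear_combination -h

noncomputable def cotPowerSum (x : ℝ) (m n : ℕ) : ℝ :=
  ∑ k ∈ range n, cot ((x + k * π) / n) ^ m

theorem cotPowerSum_zero (x : ℝ) (n : ℕ) : cotPowerSum x 0 n = n := by
  simp [cotPowerSum]

theorem factorial_mul_cotPowerSum {x : ℝ} (hx : sin x ≠ 0) {n : ℕ} (hn : n ≠ 0) (j : ℕ) :
    j ! * cotPowerSum x (j + 1) n = n ^ (j + 1) * (P j).eval (cot x)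
      - ∑ i ∈ range (j + 1), (P j).coeff i * cotPowerSum x i n := by
  rw [← sum_eval_P_cot_add_mul_pi_div hx hn j]
  simp_rw [eval_P, sum_add_distrib, cotPowerSum, mul_sum]
  rw [sum_comm (s := range (j + 1))]
  ring

theorem tendsto_div_pow_zero_of_lt {u : ℕ → ℝ} {i m : ℕ} {L : ℝ}
    (hu : Tendsto (fun n : ℕ ↦ u n / n ^ i) atTop (𝓝 L)) (him : i < m) :
    Tendsto (fun n : ℕ ↦ u n / n ^ m) atTop (𝓝 0) := by
  have hpow : Tendsto (fun n : ℕ ↦ ((n : ℝ) ^ (m - i))⁻¹) atTop (𝓝 0) :=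
    ((tendsto_pow_atTop (by omega)).comp tendsto_natCast_atTop_atTop).inv_tendsto_atTop
  refine (mul_zero L ▸ hu.mul hpow).congr fun n ↦ ?_
  rw [← div_eq_mul_inv, div_div, ← pow_add, Nat.add_sub_cancel' him.le]

theorem tendsto_cotPowerSum_div_pow {x : ℝ} (hx : sin x ≠ 0) (j : ℕ) :
    Tendsto (fun n : ℕ ↦ cotPowerSum x (j + 1) n / n ^ (j + 1)) atTop
      (𝓝 ((P j).eval (cot x) / j !)) := by
  induction j using Nat.strong_induction_on with
  | _ j ih =>
  have hrel : (fun n : ℕ ↦ cotPowerSum x (j + 1) n / n ^ (j + 1)) =ᶠ[atTop] fun n ↦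
      ((P j).eval (cot x) -
        ∑ i ∈ range (j + 1), (P j).coeff i * (cotPowerSum x i n / n ^ (j + 1))) / j ! := by
    filter_upwards [eventually_ne_atTop 0] with n hn
    have := factorial_mul_cotPowerSum hx hn j
    simp_rw [mul_div_assoc', ← sum_div]
    field_simp
    linear_combination this
  rcases j with _ | j
  · have hP₀ : P 0 = X := rfl
    simp only [hP₀, zero_add, eval_X, coeff_X_zero, zero_mul, sum_range_one, sub_zero,
      factorial_zero, cast_one, div_one] at hrel ⊢
    exact tendsto_const_nhds.congr' hrel.symm
  · have hlower : ∀ i ∈ range (j + 2),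
        Tendsto (fun n : ℕ ↦ (P (j + 1)).coeff i * (cotPowerSum x i n / n ^ (j + 2))) atTop
          (𝓝 0) := by
      intro i hi
      rw [← mul_zero ((P (j + 1)).coeff i)]
      refine Tendsto.const_mul _ ?_
      rcases i with _ | i
      · have hS₀ : Tendsto (fun n : ℕ ↦ cotPowerSum x 0 n / n ^ 1) atTop (𝓝 1) := by
          refine tendsto_const_nhds.congr' ?_
          filter_upwards [eventually_ne_atTop 0] with n hn
          rw [cotPowerSum_zero, pow_one, div_self (by exact_mod_cast hn)]
        exact tendsto_div_pow_zero_of_lt hS₀ (by omega)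
      · rw [mem_range] at hi
        exact tendsto_div_pow_zero_of_lt (ih i (by omega)) hi
    refine Tendsto.congr' hrel.symm ?_
    simpa using ((tendsto_finsetSum _ hlower).const_sub ((P (j + 1)).eval (cot x))).div_const _

theorem stmt_18 (m : ℕ) (hm : 2 ≤ m) (α : ℝ) (hα0 : 0 < α) (hαπ : α < Real.pi) :
    Tendsto
      (fun n : ℕ =>
        (1 / (n : ℝ) ^ m) * ∑ k ∈ Finset.range n, Real.cot ((α + k * Real.pi) / n) ^ m)
      atTop
      (nhds ((P (m - 1)).eval (Real.cot α) / (Nat.factorial (m - 1) : ℝ))) := by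
  obtain ⟨j, rfl⟩ : ∃ j, m = j + 1 := ⟨m - 1, by omega⟩
  simpa only [cotPowerSum, one_div_mul_eq_div, Nat.add_sub_cancel] using
    tendsto_cotPowerSum_div_pow (sin_pos_of_pos_of_lt_pi hα0 hαπ).ne' j
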